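/- arXiv:math/0608575 — 7 statements merged into one kernel-verified Lean document; each statement's English description precedes it below -/
import Mathlib

section
/- Every SUC function on a topological group G is both left and right uniformly continuous. -/
/-!
Write `f g = F (g • x₀)`; `F` is uniformly continuous since `X` is compact. Left uniform
continuity is then the SUC condition at `x₀` read through `F`. Right uniform continuity needs
only compactness and joint continuity of the action: `u • x` is uniformly close to `x` for `u`
near `1`, uniformly in `x ∈ X` (a tube-lemma argument), and one applies this at `x = g • x₀`.
-/

open Filter Topology

universe u

variable (G : Type u) [Group G] [TopologicalSpace G]

/-- A compact (more generally, uniform) `G`-flow is strongly uniformly continuous (SUC):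
for every point `x₀` and every entourage `ε` there is a neighborhood `U` of the identity
such that `(g • (u • x₀), g • x₀) ∈ ε` for all `g ∈ G` and `u ∈ U`. -/
def IsSUCFlow (X : Type u) [UniformSpace X] [MulAction G X] : Prop :=
  ∀ x₀ : X, ∀ ε ∈ uniformity X, ∃ U ∈ nhds (1 : G), ∀ g : G, ∀ u ∈ U,
    (g • u • x₀, g • x₀) ∈ ε

/-- `f : G → ℝ` is an SUC function: it comes from a compact SUC `G`-flow. -/
def IsSUCFunction (f : G → ℝ) : Prop :=
  ∃ (X : Type u) (_ : UniformSpace X) (_ : CompactSpace X) (_ : T2Space X)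
    (_ : MulAction G X) (_ : ContinuousSMul G X),
    IsSUCFlow G X ∧ ∃ (x₀ : X) (F : X → ℝ), Continuous F ∧ ∀ g : G, f g = F (g • x₀)

/-- `f` is right uniformly continuous. -/
def RightUC (f : G → ℝ) : Prop :=
  ∀ ε : ℝ, 0 < ε → ∃ U ∈ nhds (1 : G), ∀ u ∈ U, ∀ g : G, |f (u * g) - f g| < ε

/-- `f` is left uniformly continuous. -/
def LeftUC (f : G → ℝ) : Prop :=
  ∀ ε : ℝ, 0 < ε → ∃ U ∈ nhds (1 : G), ∀ u ∈ U, ∀ g : G, |f (g * u) - f g| < ε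

theorem exists_nhds_one_forall_smul_mem_of_compactSpace {M X : Type*} [Monoid M]
    [TopologicalSpace M] [UniformSpace X] [CompactSpace X] [MulAction M X] [ContinuousSMul M X]
    {s : Set (X × X)} (hs : s ∈ uniformity X) :
    ∃ U ∈ 𝓝 (1 : M), ∀ u ∈ U, ∀ x : X, (u • x, x) ∈ s := by
  obtain ⟨U, hU, hUs⟩ := isCompact_univ.mem_uniformity_of_prod
    (f := fun (u : M) (x : X) ↦ u • x) continuous_smul.continuousOn (Set.mem_univ 1) hs
  exact ⟨U, nhdsWithin_univ (1 : M) ▸ hU, fun u hu x ↦ by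
    simpa only [one_smul] using hUs u hu x trivial⟩

theorem setOf_abs_sub_lt_mem_uniformity {X : Type*} [UniformSpace X] {F : X → ℝ}
    (hF : UniformContinuous F) {ε : ℝ} (hε : 0 < ε) :
    {p : X × X | |F p.1 - F p.2| < ε} ∈ uniformity X :=
  hF (Metric.dist_mem_uniformity hε)

theorem IsSUCFlow.leftUC_comp_smul {X : Type u} [UniformSpace X] [MulAction G X]
    (hX : IsSUCFlow G X) {F : X → ℝ} (hF : UniformContinuous F) (x₀ : X) :
    LeftUC G fun g ↦ F (g • x₀) := by
  intro ε hε
  obtain ⟨U, hU, hUε⟩ := hX x₀ _ (setOf_abs_sub_lt_mem_uniformity hF hε)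
  refine ⟨U, hU, fun u hu g ↦ ?_⟩
  simpa only [mul_smul, Set.mem_ofPred_eq] using hUε g u hu

theorem rightUC_comp_smul_of_compactSpace {X : Type*} [UniformSpace X] [CompactSpace X]
    [MulAction G X] [ContinuousSMul G X] {F : X → ℝ} (hF : Continuous F) (x₀ : X) :
    RightUC G fun g ↦ F (g • x₀) := by
  intro ε hε
  obtain ⟨U, hU, hUε⟩ := exists_nhds_one_forall_smul_mem_of_compactSpace (M := G)
    (setOf_abs_sub_lt_mem_uniformity (CompactSpace.uniformContinuous_of_continuous hF) hε)
  refine ⟨U, hU, fun u hu g ↦ ?_⟩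
  simpa only [mul_smul, Set.mem_ofPred_eq] using hUε u hu (g • x₀)

theorem statement1 (f : G → ℝ)
    (hf : IsSUCFunction G f) : LeftUC G f ∧ RightUC G f := by
  obtain ⟨X, _, _, _, _, _, hSUC, x₀, F, hF, hfF⟩ := hf
  obtain rfl : f = fun g ↦ F (g • x₀) := funext hfF
  exact ⟨hSUC.leftUC_comp_smul G (CompactSpace.uniformContinuous_of_continuous hF) x₀,
    rightUC_comp_smul_of_compactSpace G hF x₀⟩
end

section
/- Let (X, 𝒰) be a uniform space carrying an action of a topological group G that is jointly continuous with respect to the topology of 𝒰, and let x₀ ∈ X. Assume x₀ is a point of local equicontinuity, i.e. for every entourage ε ∈ 𝒰 there is a set O containing x₀ and open in the subspace G•x₀ such that (g•x, g•x₀) ∈ ε for all x ∈ O and all g ∈ G. Then x₀ is an SUC point of X: for every ε ∈ 𝒰 there is a neighborhood U of the identity e ∈ G such that (g•(u•x₀), g•x₀) ∈ ε for all g ∈ G and all u ∈ U. -/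
open Topology

theorem statement2_general {G X : Type*} [Group G] [TopologicalSpace G]
    [UniformSpace X] [MulAction G X] [ContinuousSMul G X] (x₀ : X)
    (hLE : ∀ ε ∈ uniformity X, ∃ V : Set X, IsOpen V ∧ x₀ ∈ V ∧
      ∀ x ∈ V ∩ MulAction.orbit G x₀, ∀ g : G, (g • x, g • x₀) ∈ ε) :
    ∀ ε ∈ uniformity X, ∃ U ∈ nhds (1 : G), ∀ g : G, ∀ u ∈ U,
      (g • u • x₀, g • x₀) ∈ ε := by
  intro ε hε
  obtain ⟨V, hV_open, hx₀V, hV⟩ := hLE ε hε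
  have hV_nhds : (· • x₀) ⁻¹' V ∈ 𝓝 (1 : G) :=
    (continuous_id.smul continuous_const).continuousAt.preimage_mem_nhds
      (by simpa using hV_open.mem_nhds hx₀V)
  exact ⟨_, hV_nhds, fun g u hu => hV (u • x₀) ⟨hu, u, rfl⟩ g⟩

/-- In a uniform `G`-space, every point of local equicontinuity
(equicontinuity point of the closure of its orbit, here expressed via relatively open
subsets of the orbit `G • x₀`) is an SUC point. -/
theorem statement2 {G X : Type*} [Group G] [TopologicalSpace G] [IsTopologicalGroup G]
    [UniformSpace X] [MulAction G X] [ContinuousSMul G X] (x₀ : X)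
    (hLE : ∀ ε ∈ uniformity X, ∃ V : Set X, IsOpen V ∧ x₀ ∈ V ∧
      ∀ x ∈ V ∩ MulAction.orbit G x₀, ∀ g : G, (g • x, g • x₀) ∈ ε) :
    ∀ ε ∈ uniformity X, ∃ U ∈ nhds (1 : G), ∀ g : G, ∀ u ∈ U,
      (g • u • x₀, g • x₀) ∈ ε :=
  statement2_general x₀ hLE
end

section
/- Let G be a topological group, X a compact G-flow and f : X → ℝ continuous. The following are equivalent: (1) there exist a compact SUC G-flow Y, a continuous G-equivariant map ν : X → Y and a continuous function F : Y → ℝ with f = F ∘ ν; (2) for every x₀ ∈ X and every ε > 0 there exists a neighborhood U of the identity e ∈ G such that |f(g•(u•x₀)) − f(g•x₀)| < ε for all g ∈ G and all u ∈ U. -/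
/-!
Given (2), send `x` to its orbit function `g ↦ f (g • x)` in `ℝ^G` (pointwise topology). The image
`Y` is compact, `G` acts on it by right translation, and `f` is recovered as evaluation at `1`.
Since the uniformity of `ℝ^G` is generated by the coordinates, and translating `g` on the left
preserves condition (2), each coordinate and hence `Y` itself is SUC. The action on `Y` is
continuous because `G × X → G × Y` is a closed, hence quotient, map.
Conversely, on a compact flow `F` is uniformly continuous, so the SUC estimate for `Y` at `ν x₀`
transfers to `f = F ∘ ν` at `x₀` by equivariance.
-/

open Filter Topology

open Uniformity

universe u

variable (G : Type u) [Group G] [TopologicalSpace G]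

section OrbitMap

variable {M X Z : Type*} [Monoid M] [MulAction M X]

variable (M) in
def orbitMap (f : X → Z) (x : X) : M → Z := fun g => f (g • x)

theorem orbitMap_smul (f : X → Z) (h : M) (x : X) :
    orbitMap M f (h • x) = fun g => orbitMap M f x (g * h) := by
  funext g
  simp only [orbitMap, mul_smul]

instance (f : X → Z) : MulAction M (Set.range (orbitMap M f)) where
  smul h φ := ⟨fun g => φ.1 (g * h), by
    obtain ⟨x, hx⟩ := φ.2
    exact ⟨h • x, by rw [orbitMap_smul, hx]⟩⟩
  one_smul φ := Subtype.ext (funext fun g => congrArg φ.1 (mul_one g))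
  mul_smul a b φ := Subtype.ext (funext fun g => congrArg φ.1 (mul_assoc g a b).symm)

theorem rangeFactorization_orbitMap_smul (f : X → Z) (h : M) (x : X) :
    Set.rangeFactorization (orbitMap M f) (h • x) =
      h • Set.rangeFactorization (orbitMap M f) x :=
  Subtype.ext (orbitMap_smul f h x)

theorem continuous_orbitMap [TopologicalSpace X] [ContinuousConstSMul M X] [TopologicalSpace Z]
    {f : X → Z} (hf : Continuous f) : Continuous (orbitMap M f) :=
  continuous_pi fun g => hf.comp (continuous_const_smul g)

end OrbitMap

theorem IsProperMap.continuousSMul {M X Y : Type*} [TopologicalSpace M] [SMul M X] [SMul M Y]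
    [TopologicalSpace X] [TopologicalSpace Y] [ContinuousSMul M X] {q : X → Y}
    (hq : IsProperMap q) (hsurj : Function.Surjective q)
    (hequiv : ∀ (g : M) (x : X), q (g • x) = g • q x) : ContinuousSMul M Y := by
  have hquot : IsQuotientMap (Prod.map (id : M → M) q) :=
    (isProperMap_id.prodMap hq).isClosedMap.isQuotientMap
      (continuous_id.prodMap hq.continuous) (Function.surjective_id.prodMap hsurj)
  refine ⟨hquot.continuous_iff.2 ?_⟩
  have : (fun p : M × Y => p.1 • p.2) ∘ Prod.map id q = fun p : M × X => q (p.1 • p.2) :=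
    funext fun p => (hequiv p.1 p.2).symm
  rw [this]
  exact hq.continuous.comp continuous_smul

/-- The filter `⊤ ×ˢ 𝓝 1` on pairs `(g, u)` encodes "for all `g` and all `u` near `1`". -/
def IsSUCFun {X Z : Type*} [MulAction G X] [UniformSpace Z] (f : X → Z) : Prop :=
  ∀ x₀ : X, Tendsto (fun p : G × G => (f (p.1 • p.2 • x₀), f (p.1 • x₀))) (⊤ ×ˢ 𝓝 1) (𝓤 Z)

section SUC

variable {G} {X Z : Type*} {Y : Type u} [MulAction G X] [MulAction G Y] [UniformSpace Z]

theorem isSUCFun_iff {f : X → Z} :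
    IsSUCFun G f ↔ ∀ x₀ : X, ∀ ε ∈ 𝓤 Z, ∃ U ∈ 𝓝 (1 : G), ∀ g : G, ∀ u ∈ U,
      (f (g • u • x₀), f (g • x₀)) ∈ ε := by
  simp only [IsSUCFun, tendsto_def, top_prod, mem_comap]
  refine forall_congr' fun x₀ => forall₂_congr fun ε _ => ?_
  exact ⟨fun ⟨U, hU, hsub⟩ => ⟨U, hU, fun g u hu => hsub (show (g, u).2 ∈ U from hu)⟩,
    fun ⟨U, hU, h⟩ => ⟨U, hU, fun p hp => h p.1 p.2 hp⟩⟩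

theorem isSUCFun_iff_dist {Z : Type*} [PseudoMetricSpace Z] {f : X → Z} :
    IsSUCFun G f ↔ ∀ x₀ : X, ∀ ε : ℝ, 0 < ε → ∃ U ∈ 𝓝 (1 : G), ∀ g : G, ∀ u ∈ U,
      dist (f (g • u • x₀)) (f (g • x₀)) < ε := by
  simp only [IsSUCFun, Metric.uniformity_basis_dist.tendsto_right_iff, top_prod,
    eventually_comap]
  refine forall_congr' fun x₀ => forall₂_congr fun ε _ => ?_
  rw [(𝓝 (1 : G)).basis_sets.eventually_iff]
  exact ⟨fun ⟨U, hU, h⟩ => ⟨U, hU, fun g u hu => h hu (g, u) rfl⟩,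
    fun ⟨U, hU, h⟩ => ⟨U, hU, fun u hu p hp => hp ▸ h p.1 u hu⟩⟩

theorem isSUCFlow_iff_isSUCFun_id [UniformSpace Y] :
    IsSUCFlow G Y ↔ IsSUCFun G (id : Y → Y) := by
  rw [isSUCFun_iff]
  rfl

theorem IsSUCFlow.isSUCFun_comp [UniformSpace Y] (hY : IsSUCFlow G Y) {F : Y → Z}
    (hF : UniformContinuous F) {ν : X → Y} (hν : ∀ (g : G) (x : X), ν (g • x) = g • ν x) :
    IsSUCFun G (F ∘ ν) := fun x₀ => by
  simpa only [Function.comp_def, id, hν] using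
    Tendsto.comp hF (isSUCFlow_iff_isSUCFun_id.1 hY (ν x₀))

theorem IsSUCFun.isSUCFlow [UniformSpace Y] {q : X → Y} (hq : IsSUCFun G q)
    (hsurj : Function.Surjective q) (hequiv : ∀ (g : G) (x : X), q (g • x) = g • q x) :
    IsSUCFlow G Y := by
  rw [isSUCFlow_iff_isSUCFun_id]
  intro y₀
  obtain ⟨x₀, rfl⟩ := hsurj y₀
  simpa only [id, hequiv] using hq x₀

theorem IsUniformInducing.isSUCFun_comp_iff {W : Type*} [UniformSpace W] {e : W → Z}
    (he : IsUniformInducing e) {q : X → W} : IsSUCFun G (e ∘ q) ↔ IsSUCFun G q := by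
  simp only [IsSUCFun, ← he.comap_uniformity, tendsto_comap_iff]
  rfl

theorem IsSUCFun.orbitMap {f : X → Z} (hf : IsSUCFun G f) : IsSUCFun G (orbitMap G f) :=
    fun x₀ => by
  rw [Pi.uniformity, tendsto_iInf]
  intro g
  rw [tendsto_comap_iff]
  simpa only [Function.comp_def, _root_.orbitMap, mul_smul, Prod.map_fst, Prod.map_snd, id] using
    (hf x₀).comp ((tendsto_top (f := (g * ·))).prodMap tendsto_id)

end SUC

theorem statement3 {X : Type u} [TopologicalSpace X] [CompactSpace X]
    [MulAction G X] [ContinuousSMul G X] (f : X → ℝ) (hf : Continuous f) :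
    (∃ (Y : Type u) (_ : UniformSpace Y) (_ : CompactSpace Y) (_ : T2Space Y)
      (_ : MulAction G Y) (_ : ContinuousSMul G Y),
      IsSUCFlow G Y ∧ ∃ (ν : X → Y) (F : Y → ℝ),
        Continuous ν ∧ (∀ (g : G) (x : X), ν (g • x) = g • ν x) ∧
        Continuous F ∧ f = F ∘ ν) ↔
    (∀ x₀ : X, ∀ ε : ℝ, 0 < ε → ∃ U ∈ nhds (1 : G), ∀ g : G, ∀ u ∈ U,
      |f (g • u • x₀) - f (g • x₀)| < ε) := by
  simp only [← Real.dist_eq, ← isSUCFun_iff_dist]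
  constructor
  · rintro ⟨Y, _, _, _, _, _, hY, ν, F, -, hν, hF, rfl⟩
    exact hY.isSUCFun_comp (CompactSpace.uniformContinuous_of_continuous hF) hν
  · intro hSUC
    set q := Set.rangeFactorization (orbitMap G f)
    have hq : Continuous q := (continuous_orbitMap hf).rangeFactorization
    have hsurj : Function.Surjective q := Set.rangeFactorization_surjective
    have hequiv : ∀ (g : G) (x : X), q (g • x) = g • q x := rangeFactorization_orbitMap_smul f
    have : CompactSpace (Set.range (orbitMap G f)) := hsurj.compactSpace hq
    refine ⟨_, inferInstance, inferInstance, inferInstance, inferInstance,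
      hq.isProperMap.continuousSMul hsurj hequiv,
      ((isUniformInducing_val _).isSUCFun_comp_iff.1 hSUC.orbitMap).isSUCFlow hsurj hequiv,
      q, fun φ => φ.1 1, hq, hequiv, (continuous_apply 1).comp continuous_subtype_val, ?_⟩
    funext x
    simp [q, orbitMap]
end

section
/- Let G be a topological group, X a compact G-flow and a, b ∈ X a pair of SUC-proximal points: there exist a point x₀ ∈ X and nets (s_i) and (g_i) in G such that s_i converges to the identity e, g_i•x₀ converges to a, and g_i•(s_i•x₀) converges to b. Then f(a) = f(b) for every f ∈ SUC(X). -/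
/-!
An equivariant map sends the nets to `g_i • ν x₀ → ν a` and `g_i • s_i • ν x₀ → ν b` in the SUC
factor `Y`. Since `s_i → e`, strong uniform continuity makes these two nets uniformly
asymptotic, so their limits agree in the Hausdorff space `Y`, and `f = F ∘ ν` takes the same
value at `a` and `b`.
-/

open Filter Topology Uniformity

universe u

variable (G : Type u) [Group G] [TopologicalSpace G]

/-- A continuous function on a `G`-space `X` belongs to `SUC(X)`: it factors through a
continuous `G`-map into a compact SUC `G`-flow. -/
def MemSUC {X : Type u} [TopologicalSpace X] [MulAction G X] (f : X → ℝ) : Prop :=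
  ∃ (Y : Type u) (_ : UniformSpace Y) (_ : CompactSpace Y) (_ : T2Space Y)
    (_ : MulAction G Y) (_ : ContinuousSMul G Y),
    IsSUCFlow G Y ∧ ∃ (ν : X → Y) (F : Y → ℝ),
      Continuous ν ∧ (∀ (g : G) (x : X), ν (g • x) = g • ν x) ∧
      Continuous F ∧ f = F ∘ ν

section

variable {G} {Y : Type u} [UniformSpace Y] [MulAction G Y]

theorem IsSUCFlow.tendsto_smul_smul_uniformity (hY : IsSUCFlow G Y) {ι : Type*}
    {l : Filter ι} {s : ι → G} (hs : Tendsto s l (𝓝 1)) (g : ι → G) (y : Y) :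
    Tendsto (fun i => (g i • s i • y, g i • y)) l (𝓤 Y) := fun ε hε => by
  obtain ⟨U, hU, hUε⟩ := hY y ε hε
  exact mem_map.2 (mem_of_superset (hs hU) fun i hi => hUε (g i) (s i) hi)

theorem IsSUCFlow.eq_of_tendsto_smul [T2Space Y] (hY : IsSUCFlow G Y) {ι : Type*}
    {l : Filter ι} [l.NeBot] {s g : ι → G} (hs : Tendsto s l (𝓝 1)) {y a b : Y}
    (ha : Tendsto (fun i => g i • y) l (𝓝 a)) (hb : Tendsto (fun i => g i • s i • y) l (𝓝 b)) :
    a = b :=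
  tendsto_nhds_unique
    (ha.congr_uniformity (tendsto_swap_uniformity.comp (hY.tendsto_smul_smul_uniformity hs g y)))
    hb

end

theorem statement5 {X : Type u} [TopologicalSpace X] [MulAction G X] (a b : X)
    (hprox : ∃ (x₀ : X) (ι : Type u) (l : Filter ι), l.NeBot ∧ ∃ s g : ι → G,
      Tendsto s l (nhds (1 : G)) ∧ Tendsto (fun i => g i • x₀) l (nhds a) ∧
      Tendsto (fun i => g i • s i • x₀) l (nhds b))
    (f : X → ℝ) (hf : MemSUC G f) :
    f a = f b := by
  obtain ⟨x₀, ι, l, hl, s, g, hs, ha, hb⟩ := hprox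
  obtain ⟨Y, _, _, _, _, _, hSUC, ν, F, hν, hequiv, -, rfl⟩ := hf
  have ha' : Tendsto (fun i => g i • ν x₀) l (𝓝 (ν a)) := by
    simpa only [Function.comp_def, hequiv] using (hν.tendsto a).comp ha
  have hb' : Tendsto (fun i => g i • s i • ν x₀) l (𝓝 (ν b)) := by
    simpa only [Function.comp_def, hequiv] using (hν.tendsto b).comp hb
  exact congrArg F (hSUC.eq_of_tendsto_smul hs ha' hb')
end

section
/- Let G be a topological group and H a closed subgroup such that the coset space G/H (with the quotient topology and the left translation action of G) is compact. If the compact G-flow G/H is SUC, then it is equicontinuous: for every entourage ε of the unique uniformity of G/H there is an entourage δ such that (g•x, g•y) ∈ ε for all g ∈ G whenever (x, y) ∈ δ. -/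
open Topology Uniformity

/-!
Since the orbit maps `g ↦ g • x₀` of `G ⧸ H` are open, SUC at `x₀` makes the
translations `(g • ·)` equicontinuous at `x₀`. On a compact uniform space an equicontinuous
family is uniformly equicontinuous, which is the claim.
-/

def IsStronglyUniformlyContinuous (G X : Type*) [One G] [TopologicalSpace G] [SMul G X]
    [UniformSpace X] : Prop :=
  ∀ x₀ : X, ∀ ε ∈ 𝓤 X, ∃ U ∈ 𝓝 (1 : G), ∀ g : G, ∀ v ∈ U, (g • v • x₀, g • x₀) ∈ ε

theorem QuotientGroup.isOpenMap_smul {G : Type*} [Group G] [TopologicalSpace G]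
    [SeparatelyContinuousMul G] {H : Subgroup G} (x : G ⧸ H) :
    IsOpenMap (fun g : G => g • x) := by
  obtain ⟨a, rfl⟩ := QuotientGroup.mk_surjective x
  exact QuotientGroup.isOpenMap_coe.comp (isOpenMap_mul_right a)

theorem IsStronglyUniformlyContinuous.equicontinuous {G X : Type*} [Monoid G]
    [TopologicalSpace G] [MulAction G X] [UniformSpace X]
    (hSUC : IsStronglyUniformlyContinuous G X)
    (hopen : ∀ x : X, IsOpenMap (fun g : G => g • x)) :
    Equicontinuous (fun g : G => (g • · : X → X)) := by
  intro x₀ ε hε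
  obtain ⟨U, hU, hUε⟩ := hSUC x₀ (Prod.swap ⁻¹' ε) (symm_le_uniformity hε)
  have hUx₀ : (· • x₀) '' U ∈ 𝓝 x₀ := by
    simpa only [one_smul] using (hopen x₀).image_mem_nhds hU
  filter_upwards [hUx₀]
  rintro _ ⟨v, hv, rfl⟩ g
  exact hUε g v hv

theorem statement6_general {G : Type*} [Group G] [TopologicalSpace G] [IsTopologicalGroup G]
    (H : Subgroup G) [CompactSpace (G ⧸ H)]
    (u : UniformSpace (G ⧸ H))
    (hu : u.toTopologicalSpace = (inferInstance : TopologicalSpace (G ⧸ H)))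
    (hSUC : ∀ x₀ : G ⧸ H, ∀ ε ∈ @uniformity (G ⧸ H) u, ∃ U ∈ nhds (1 : G),
      ∀ g : G, ∀ v ∈ U, (g • v • x₀, g • x₀) ∈ ε) :
    ∀ ε ∈ @uniformity (G ⧸ H) u, ∃ δ ∈ @uniformity (G ⧸ H) u,
      ∀ x y : G ⧸ H, (x, y) ∈ δ → ∀ g : G, (g • x, g • y) ∈ ε := by
  have hopen : ∀ x : G ⧸ H, @IsOpenMap G _ _ u.toTopologicalSpace (fun g : G => g • x) :=
    hu ▸ QuotientGroup.isOpenMap_smul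
  have hcompact : @CompactSpace _ u.toTopologicalSpace := hu ▸ ‹_›
  let _ : UniformSpace (G ⧸ H) := u
  have hequi := CompactSpace.uniformEquicontinuous_of_equicontinuous
    (IsStronglyUniformlyContinuous.equicontinuous hSUC hopen)
  intro ε hε
  obtain ⟨δ, hδ, hδε⟩ := (hequi ε hε).exists_mem
  exact ⟨δ, hδ, fun x y hxy => hδε (x, y) hxy⟩

/-- Let `H` be a closed subgroup of a topological group `G` such that the
coset space `G ⧸ H` (with the quotient topology and left translation action) is compact,
and let `u` be the (unique) uniformity on `G ⧸ H` compatible with the quotient topology.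
If the compact `G`-flow `G ⧸ H` is SUC then it is equicontinuous. -/
theorem statement6 {G : Type*} [Group G] [TopologicalSpace G] [IsTopologicalGroup G]
    (H : Subgroup G) (hH : IsClosed (H : Set G)) [CompactSpace (G ⧸ H)]
    (u : UniformSpace (G ⧸ H))
    (hu : u.toTopologicalSpace = (inferInstance : TopologicalSpace (G ⧸ H)))
    (hSUC : ∀ x₀ : G ⧸ H, ∀ ε ∈ @uniformity (G ⧸ H) u, ∃ U ∈ nhds (1 : G),
      ∀ g : G, ∀ v ∈ U, (g • v • x₀, g • x₀) ∈ ε) :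
    ∀ ε ∈ @uniformity (G ⧸ H) u, ∃ δ ∈ @uniformity (G ⧸ H) u,
      ∀ x y : G ⧸ H, (x, y) ∈ δ → ∀ g : G, (g • x, g • y) ∈ ε :=
  statement6_general H u hu hSUC
end

section
/- Let G be a second countable topological group and X a G-space (a topological space with a jointly continuous G-action). Suppose there exists x₀ ∈ X whose orbit Y = G•x₀ is dense in X and uncountable, and that the action is 2-homogeneous on Y: for all a₁, a₂ ∈ Y with a₁ ≠ a₂ and all b₁, b₂ ∈ Y with b₁ ≠ b₂ there exists g ∈ G with g•a₁ = b₁ and g•a₂ = b₂. Then every f ∈ SUC(X) is constant. -/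
open Filter Topology

universe u

variable (G : Type u) [Group G] [TopologicalSpace G]

variable {G}

/-- Otherwise the stabilizer of `x` would be open, and then `G • x = D • x` for a countable dense
`D ⊆ G`, since every coset `g • stabilizer` meets `D`. -/
theorem MulAction.exists_smul_ne_of_not_countable_orbit [ContinuousMul G] [TopologicalSpace.SeparableSpace G]
    {X : Type*} [MulAction G X] {x : X} (hx : ¬ (MulAction.orbit G x).Countable)
    {U : Set G} (hU : U ∈ 𝓝 1) : ∃ u ∈ U, u • x ≠ x := by
  by_contra! hUx
  obtain ⟨D, hDc, hDd⟩ := TopologicalSpace.exists_countable_dense G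
  refine hx ((hDc.image (· • x)).mono ?_)
  rintro _ ⟨g, rfl⟩
  have hgU : (g⁻¹ * ·) ⁻¹' U ∈ 𝓝 g :=
    (continuous_const_mul g⁻¹).continuousAt.preimage_mem_nhds (by rwa [inv_mul_cancel])
  obtain ⟨d, hdD, hdU⟩ := hDd.inter_nhds_nonempty hgU
  refine ⟨d, hdD, ?_⟩
  simpa [mul_smul, inv_smul_eq_iff] using hUx _ hdU

theorem IsSUCFlow.exists_nhds_dist_smul_smul_lt {Y : Type u} [UniformSpace Y] [MulAction G Y]
    (hY : IsSUCFlow G Y) {β : Type*} [PseudoMetricSpace β] {F : Y → β}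
    (hF : UniformContinuous F) (y₀ : Y) {ε : ℝ} (hε : 0 < ε) :
    ∃ U ∈ 𝓝 (1 : G), ∀ g : G, ∀ u ∈ U, dist (F (g • u • y₀)) (F (g • y₀)) < ε :=
  hY y₀ _ (hF (Metric.dist_mem_uniformity hε))

namespace MemSUC

variable {X : Type u} [TopologicalSpace X] [MulAction G X] {f : X → ℝ}

theorem continuous (hf : MemSUC G f) : Continuous f := by
  obtain ⟨Y, _, _, _, _, _, -, ν, F, hν, -, hF, rfl⟩ := hf
  exact hF.comp hν

theorem exists_nhds_dist_smul_smul_lt (hf : MemSUC G f) (x₀ : X) {ε : ℝ} (hε : 0 < ε) :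
    ∃ U ∈ 𝓝 (1 : G), ∀ g : G, ∀ u ∈ U, dist (f (g • u • x₀)) (f (g • x₀)) < ε := by
  obtain ⟨Y, _, _, _, _, _, hY, ν, F, -, hν, hF, rfl⟩ := hf
  obtain ⟨U, hU, hUF⟩ :=
    hY.exists_nhds_dist_smul_smul_lt (CompactSpace.uniformContinuous_of_continuous hF) (ν x₀) hε
  exact ⟨U, hU, fun g u hu => by simpa only [Function.comp_apply, hν] using hUF g u hu⟩

end MemSUC

theorem statement14_general {G : Type u} [Group G] [TopologicalSpace G] [IsTopologicalGroup G]
    [SecondCountableTopology G]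
    {X : Type u} [TopologicalSpace X] [MulAction G X]
    (x₀ : X) (hdense : Dense (MulAction.orbit G x₀))
    (huncountable : ¬ (MulAction.orbit G x₀).Countable)
    (h2hom : ∀ a₁ a₂ : X, a₁ ∈ MulAction.orbit G x₀ → a₂ ∈ MulAction.orbit G x₀ →
      a₁ ≠ a₂ → ∀ b₁ b₂ : X, b₁ ∈ MulAction.orbit G x₀ → b₂ ∈ MulAction.orbit G x₀ →
      b₁ ≠ b₂ → ∃ g : G, g • a₁ = b₁ ∧ g • a₂ = b₂)
    (f : X → ℝ) (hf : MemSUC G f) :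
    ∀ x y : X, f x = f y := by
  -- Moving the pair `(u • x₀, x₀)`, with `u` close to `1`, onto `(a, x₀)` makes `f a` close to `f x₀`.
  have horbit : Set.EqOn f (fun _ => f x₀) (MulAction.orbit G x₀) := by
    intro a ha
    by_cases hax : a = x₀
    · rw [hax]
    refine eq_of_forall_dist_le fun ε hε => ?_
    obtain ⟨U, hU, hfU⟩ := hf.exists_nhds_dist_smul_smul_lt x₀ hε
    obtain ⟨u, hu, hux⟩ := MulAction.exists_smul_ne_of_not_countable_orbit huncountable hU
    obtain ⟨g, hga, hgx⟩ := h2hom _ _ (MulAction.mem_orbit x₀ u) (MulAction.mem_orbit_self x₀)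
      hux a x₀ ha (MulAction.mem_orbit_self x₀) hax
    have hdist := hfU g u hu
    rw [hga, hgx] at hdist
    exact hdist.le
  have hconst := hf.continuous.ext_on hdense continuous_const horbit
  exact fun x y => (congrFun hconst x).trans (congrFun hconst y).symm

/-- Let `G` be a second countable topological group acting continuously on
a space `X` with a dense uncountable orbit `G • x₀` on which the action is 2-homogeneous.
Then every `f ∈ SUC(X)` is constant. -/
theorem statement14 {G : Type u} [Group G] [TopologicalSpace G] [IsTopologicalGroup G]
    [SecondCountableTopology G]
    {X : Type u} [TopologicalSpace X] [MulAction G X] [ContinuousSMul G X]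
    (x₀ : X) (hdense : Dense (MulAction.orbit G x₀))
    (huncountable : ¬ (MulAction.orbit G x₀).Countable)
    (h2hom : ∀ a₁ a₂ : X, a₁ ∈ MulAction.orbit G x₀ → a₂ ∈ MulAction.orbit G x₀ →
      a₁ ≠ a₂ → ∀ b₁ b₂ : X, b₁ ∈ MulAction.orbit G x₀ → b₂ ∈ MulAction.orbit G x₀ →
      b₁ ≠ b₂ → ∃ g : G, g • a₁ = b₁ ∧ g • a₂ = b₂)
    (f : X → ℝ) (hcont : Continuous f) (hf : MemSUC G f) :
    ∀ x y : X, f x = f y :=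
  statement14_general x₀ hdense huncountable h2hom f hf
end

section
/- Let G = S(ℕ) act on the one-point compactification ℕ* = ℕ ∪ {∞} by σ•n = σ(n) for n ∈ ℕ and σ•∞ = ∞. Then the closure, in the product space (ℕ*)^{ℕ*} (pointwise convergence topology), of the set of translation maps {x ↦ σ•x : σ ∈ S(ℕ)} is exactly the set of all maps p : ℕ* → ℕ* such that p(∞) = ∞ and the restriction of p to the set A = {n ∈ ℕ : p(n) ≠ ∞} is an injection of A into ℕ. Moreover, every map in this closure is continuous. -/
/-!
The closure of the translations is contained in the partial injections because the latter form a
closed set: `p ∞ = ∞` is a closed condition, and so is `p m = p n ≠ ∞ → m = n`, since the diagonal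
of the discrete open subspace `ℕ ⊆ ℕ*` is open. Conversely, a basic neighbourhood of a partial
injection `p` prescribes the values at finitely many points, namely `p n` where `p n ∈ ℕ` and all
but finitely many values where `p n = ∞`; a finite partial injection with such values exists
because `ℕ` is infinite, and it extends to a permutation. Finally, `p` is continuous at `∞`
because the preimage of a finite set under an injection is finite.
-/

open Filter Topology OnePoint Cardinal Set

theorem Equiv.Perm.exists_eqOn_of_injOn {α : Type*} [Infinite α] {s : Set α} (hs : s.Finite)
    {g : α → α} (hg : InjOn g s) : ∃ σ : Equiv.Perm α, EqOn σ g s := by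
  obtain ⟨σ, hσ⟩ := extend_function_of_lt ⟨fun x : s => g x, hg.injective⟩
    ((lt_aleph0_iff_set_finite.2 hs).trans_le (aleph0_le_mk α)) ⟨Equiv.refl α⟩
  exact ⟨σ, fun x hx => hσ ⟨x, hx⟩⟩

theorem Set.Finite.nonempty_equiv_compl {α : Type*} [Infinite α] {s : Set α} (hs : s.Finite) :
    Nonempty (α ≃ (sᶜ : Set α)) :=
  Cardinal.eq.1
    (mk_compl_of_infinite s ((lt_aleph0_iff_set_finite.2 hs).trans_le (aleph0_le_mk α))).symm

namespace OnePoint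

theorem isOpen_singleton_coe {X : Type*} [TopologicalSpace X] [DiscreteTopology X]
    (x : X) : IsOpen {(x : OnePoint X)} := by
  simpa using isOpen_image_coe.2 (isOpen_discrete {x})

theorem isOpen_setOf_fst_ne_infty_and_eq {X : Type*} [TopologicalSpace X] [DiscreteTopology X] :
    IsOpen {q : OnePoint X × OnePoint X | q.1 ≠ ∞ ∧ q.1 = q.2} := by
  have : {q : OnePoint X × OnePoint X | q.1 ≠ ∞ ∧ q.1 = q.2} =
      ⋃ x : X, {(x : OnePoint X)} ×ˢ {(x : OnePoint X)} := by
    ext ⟨a, b⟩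
    cases a <;> simp [eq_comm]
  rw [this]
  exact isOpen_iUnion fun x => (isOpen_singleton_coe x).prod (isOpen_singleton_coe x)

variable (X : Type*)

def permTranslations : Set (OnePoint X → OnePoint X) :=
  {p | ∃ σ : Equiv.Perm X, p = OnePoint.map ⇑σ}

def partialInjections : Set (OnePoint X → OnePoint X) :=
  {p | p ∞ = ∞ ∧ ∀ m n : X, p ↑m ≠ ∞ → p ↑n ≠ ∞ → p ↑m = p ↑n → m = n}

theorem permTranslations_subset_partialInjections : permTranslations X ⊆ partialInjections X := by
  rintro _ ⟨σ, rfl⟩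
  exact ⟨rfl, fun m n _ _ h => σ.injective (coe_injective h)⟩

theorem exists_perm_approx_partialInjection [Infinite X] {p : OnePoint X → OnePoint X}
    (hp : p ∈ partialInjections X) {F K : Set X} (hF : F.Finite) (hK : K.Finite) :
    ∃ σ : Equiv.Perm X, ∀ n ∈ F, (p n = ∞ → σ n ∉ K) ∧ (p n ≠ ∞ → (σ n : OnePoint X) = p n) := by
  set C := K ∪ (↑) ⁻¹' ((fun n : X => p n) '' F)
  have hC : C.Finite := hK.union ((hF.image _).preimage coe_injective.injOn)
  obtain ⟨e⟩ := hC.nonempty_equiv_compl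
  -- `n` goes to its value under `p` if it has one, and to a fresh point outside `C` otherwise
  set g : X → X := fun n => (p n).elim (e n) id
  have hg : InjOn g F := by
    intro a ha b hb hab
    have hvalue_mem : ∀ c ∈ F, ∀ k : X, p c = k → k ∈ C := fun c hc k hk => Or.inr ⟨c, hc, hk⟩
    simp only [g] at hab
    cases hpa : p a <;> cases hpb : p b <;> simp only [hpa, hpb, elim_infty, elim_some, id] at hab
    · exact e.injective (Subtype.ext hab)
    · exact ((e a).2 (hab ▸ hvalue_mem b hb _ hpb)).elim
    · exact ((e b).2 (hab ▸ hvalue_mem a ha _ hpa)).elim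
    · exact hp.2 a b (by simp [hpa]) (by simp [hpb]) (by rw [hpa, hpb, hab])
  obtain ⟨σ, hσ⟩ := Equiv.Perm.exists_eqOn_of_injOn hF hg
  refine ⟨σ, fun n hn => ⟨fun hpn hK => ?_, fun hpn => ?_⟩⟩
  · exact (e n).2 (Or.inl (by simpa [hσ hn, g, hpn] using hK))
  · obtain ⟨k, hk⟩ := ne_infty_iff_exists.1 hpn
    simp [hσ hn, g, ← hk]

variable [TopologicalSpace X] [DiscreteTopology X]

theorem isClosed_partialInjections : IsClosed (partialInjections X) := by
  simp only [partialInjections, ofPred_and, ofPred_forall]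
  refine (isClosed_infty.preimage
    (show Continuous fun p : OnePoint X → OnePoint X => p ∞ by fun_prop)).inter <|
    isClosed_iInter fun m => isClosed_iInter fun n => ?_
  have hopen : IsOpen {p : OnePoint X → OnePoint X | p m ≠ ∞ ∧ p m = p n} :=
    (show Continuous fun p : OnePoint X → OnePoint X => (p m, p n) by fun_prop).isOpen_preimage _
      isOpen_setOf_fst_ne_infty_and_eq
  convert isClosed_imp hopen (isClosed_const (p := m = n)) using 1
  ext p
  simp only [mem_ofPred_eq, and_imp]
  exact ⟨fun h hm heq => h hm (heq ▸ hm) heq, fun h hm _ => h hm⟩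

theorem partialInjections_subset_closure_permTranslations [Infinite X] :
    partialInjections X ⊆ closure (permTranslations X) := by
  intro p hp
  rw [mem_closure_iff_nhds]
  intro U hU
  rw [nhds_pi, Filter.mem_pi'] at hU
  obtain ⟨I, t, ht, htU⟩ := hU
  set F := {n : X | (n : OnePoint X) ∈ I}
  have hF : F.Finite := I.finite_toSet.preimage coe_injective.injOn
  have hK : {k : X | ¬ ∀ n ∈ F, p n = ∞ → (k : OnePoint X) ∈ t n}.Finite := by
    refine eventually_cofinite.1 <| (eventually_all_finite hF).2 fun n _ => ?_
    refine eventually_imp_distrib_left.2 fun hpn => ?_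
    rw [← cocompact_eq_cofinite, ← coclosedCompact_eq_cocompact]
    exact tendsto_coe_infty (hpn ▸ ht n)
  obtain ⟨σ, hσ⟩ := exists_perm_approx_partialInjection X hp hF hK
  refine ⟨OnePoint.map σ, htU fun x hx => ?_, σ, rfl⟩
  cases x with
  | infty => simpa [hp.1] using mem_of_mem_nhds (ht ∞)
  | coe n =>
    by_cases hpn : p n = ∞
    · simpa using not_not.1 ((hσ n hx).1 hpn) n hx hpn
    · simpa [(hσ n hx).2 hpn] using mem_of_mem_nhds (ht n)

variable {X} in
theorem continuous_of_mem_partialInjections {p : OnePoint X → OnePoint X}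
    (hp : p ∈ partialInjections X) : Continuous p := by
  rw [continuous_iff_from_discrete, hp.1, hasBasis_nhds_infty.tendsto_right_iff]
  rintro s ⟨-, hs⟩
  have hfin : {n : X | p n ∈ ((↑) '' s : Set (OnePoint X))}.Finite := by
    refine (hs.finite_of_discrete.image _).preimage fun a ha b hb hab => hp.2 a b ?_ ?_ hab
    · obtain ⟨k, -, hk⟩ := ha; exact fun h => coe_ne_infty k (hk.trans h)
    · obtain ⟨k, -, hk⟩ := hb; exact fun h => coe_ne_infty k (hk.trans h)
  refine eventually_cofinite.2 (hfin.subset fun n hn => ?_)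
  obtain ⟨k, hk⟩ := ne_infty_iff_exists.1 fun h => hn (Or.inr h)
  exact ⟨k, not_not.1 fun hks => hn (Or.inl ⟨k, hks, hk⟩), hk⟩

end OnePoint

/-- The closure, in the product space `(ℕ*)^(ℕ*)` of pointwise convergence
on the one-point compactification `ℕ* = ℕ ∪ {∞}`, of the set of translation maps
`x ↦ σ • x` (`σ • n = σ n`, `σ • ∞ = ∞`) of the permutation group `S(ℕ)` is exactly the
set of maps `p` with `p ∞ = ∞` whose restriction to `A = {n : p n ≠ ∞}` is an injection
of `A` into `ℕ`; moreover every map in this closure is continuous. -/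
theorem statement15 :
    (closure {p : OnePoint ℕ → OnePoint ℕ | ∃ σ : Equiv.Perm ℕ, p = OnePoint.map ⇑σ} =
      {p : OnePoint ℕ → OnePoint ℕ | p ∞ = ∞ ∧
        ∀ m n : ℕ, p ↑m ≠ ∞ → p ↑n ≠ ∞ → p ↑m = p ↑n → m = n}) ∧
    ∀ p ∈ closure {p : OnePoint ℕ → OnePoint ℕ | ∃ σ : Equiv.Perm ℕ, p = OnePoint.map ⇑σ},
      Continuous p := by
  have hclosure : closure (permTranslations ℕ) = partialInjections ℕ :=
    (closure_minimal (permTranslations_subset_partialInjections ℕ)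
      (isClosed_partialInjections ℕ)).antisymm
      (partialInjections_subset_closure_permTranslations ℕ)
  exact ⟨hclosure, fun p hp => continuous_of_mem_partialInjections (hclosure ▸ hp)⟩
end
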